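/- arXiv:math/0409095 — 2 statements merged into one kernel-verified Lean document; each statement's English description precedes it below -/
import Mathlib

section
/- Let B = S_{m+s,n+t}/J, with J = ({g_i x_i − f_i}_{i=m+1}^{m+s} ∪ {g′_j ρ_j − f′_j}_{j=n+1}^{n+t}), be a generalized ring of fractions over S_{m,n}, and let X := {p ∈ (K°)^{m+s} × (K°°)^{n+t} : p ∈ V(J)_K and ∏_{i=m+1}^{m+s} g_i(p) · ∏_{j=n+1}^{n+t} g′_j(p) ≠ 0}. Then the coordinate projection π : (K°)^{m+s} × (K°°)^{n+t} → (K°)^m × (K°°)^n maps X bijectively onto Dom_{m,n} B, and if X is nonempty then X is an (m+n)-dimensional K-analytic manifold. -/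
/- Common framework for formalizing "Parameterized stratification and piece number of
   D-semianalytic sets" over a complete non-Archimedean field K. -/

open Filter Topology

noncomputable section

namespace DSemi

variable (K : Type) [NontriviallyNormedField K]

/-- The variable index type for `S_{m,n}`: `m` variables of type `x` (ranging over the
closed unit ball `K°`) and `n` variables of type `ρ` (ranging over the open unit ball `K°°`). -/
abbrev Vars (m n : ℕ) := Fin m ⊕ Fin n

/-- The mixed polydisc `(K°)^m × (K°°)^n`. -/
def MixedPolydisc (m n : ℕ) : Set (Vars m n → K) :=
  {p | (∀ i : Fin m, ‖p (Sum.inl i)‖ ≤ 1) ∧ ∀ j : Fin n, ‖p (Sum.inr j)‖ < 1}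

/-- Inclusion of the original variables into an enlarged variable set. -/
def inclVars {m n s t : ℕ} : Vars m n → Vars (m + s) (n + t) :=
  Sum.map (Fin.castAdd s) (Fin.castAdd t)

/-- The newly adjoined variables inside an enlarged variable set. -/
def newVars {m n s t : ℕ} : Vars s t → Vars (m + s) (n + t) :=
  Sum.map (Fin.natAdd m) (Fin.natAdd n)

/-- Evaluation of a (multivariate) power series at a point, as the sum of the
corresponding series of monomial values (junk value if not summable). -/
def evalPS {σ : Type} (f : MvPowerSeries σ K) (p : σ → K) : K :=
  ∑' d : σ →₀ ℕ, (MvPowerSeries.coeff d f) * d.prod fun i k => p i ^ k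

/-- The subring `E[a₀,a₁,…]` generated by `E` and a zero sequence. -/
def genSubring (E : Subring K) (a : ℕ → K) : Subring K :=
  Subring.closure ((E : Set K) ∪ Set.range a)

/-- The localization of `E[a₀,a₁,…]` at the multiplicative set of its elements of
absolute value `1`, realized as a subring of `K`. -/
def locSubring (E : Subring K) (a : ℕ → K) : Subring K where
  carrier := {x | ∃ b ∈ genSubring K E a, ∃ s ∈ genSubring K E a, ‖s‖ = 1 ∧ x * s = b}
  one_mem' := ⟨1, one_mem _, 1, one_mem _, norm_one, one_mul 1⟩
  zero_mem' := ⟨0, zero_mem _, 1, one_mem _, norm_one, by ring⟩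
  add_mem' := by
    rintro x y ⟨b, hb, s, hs, hsn, hxs⟩ ⟨b', hb', s', hs', hsn', hys⟩
    exact ⟨b * s' + b' * s, add_mem (mul_mem hb hs') (mul_mem hb' hs), s * s',
      mul_mem hs hs', by rw [norm_mul, hsn, hsn', one_mul],
      by linear_combination s' * hxs + s * hys⟩
  mul_mem' := by
    rintro x y ⟨b, hb, s, hs, hsn, hxs⟩ ⟨b', hb', s', hs', hsn', hys⟩
    exact ⟨b * b', mul_mem hb hb', s * s', mul_mem hs hs',
      by rw [norm_mul, hsn, hsn', one_mul],
      by linear_combination (y * s') * hxs + b * hys⟩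
  neg_mem' := by
    rintro x ⟨b, hb, s, hs, hsn, hxs⟩
    exact ⟨-b, neg_mem hb, s, hs, hsn, by linear_combination -hxs⟩

/-- The ring `B = (E[a₀,a₁,…]_{{a : |a|=1}})^∧`: the completion (topological closure inside
the complete field `K`) of the localization above. -/
def ringB (E : Subring K) (a : ℕ → K) : Subring K :=
  (locSubring K E a).topologicalClosure

/-- A zero sequence in `K°`. -/
def IsZeroSeq (a : ℕ → K) : Prop :=
  (∀ i, ‖a i‖ ≤ 1) ∧ Tendsto a atTop (nhds 0)

/-- `f` is a separated power series over `(E,K)`: up to a constant `c ∈ K`, all of its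
coefficients lie in some ring `B ∈ 𝔅` and, for each fixed `ρ`-exponent, the coefficients
tend to `0` in the `x`-exponents; this realizes
`S_{m,n}(E,K) = K ⊗_{K°} (colim_B B⟨x⟩[[ρ]])` inside `MvPowerSeries`. -/
def IsSepSeries (E : Subring K) {m n : ℕ} (f : MvPowerSeries (Vars m n) K) : Prop :=
  ∃ (c : K) (a : ℕ → K), IsZeroSeq K a ∧
    (∀ d : Vars m n →₀ ℕ, ∃ b ∈ ringB K E a, MvPowerSeries.coeff d f = c * b) ∧
    ∀ dρ : Fin n →₀ ℕ,
      Tendsto (fun dx : Fin m →₀ ℕ => MvPowerSeries.coeff (Finsupp.sumElim dx dρ) f)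
        cofinite (nhds 0)

/-- The ring of separated power series `S_{m,n}(E,K)`, as a subalgebra of the formal power
series ring.  (The set of separated power series is closed under the algebra operations, so
the algebra it generates coincides with it.) -/
def SRing (E : Subring K) (m n : ℕ) : Subalgebra K (MvPowerSeries (Vars m n) K) :=
  Algebra.adjoin K {f | IsSepSeries K E f}

/-- `f` only involves the variables from `S`. -/
def SupportedOn {σ : Type} (f : MvPowerSeries σ K) (S : Set σ) : Prop :=
  ∀ d : σ →₀ ℕ, MvPowerSeries.coeff d f ≠ 0 → ↑d.support ⊆ S


/-- A presentation of a generalized ring of fractions over `S_{m,n}`, adjoining `s`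
new `x`-type variables and `t` new `ρ`-type variables.  Each new variable `v` is adjoined
at a stage `stage v` as a fraction `num v / den v`, where the numerator and denominator
only involve the original variables and the variables adjoined at earlier stages. -/
structure GenFracPres (E : Subring K) (m n s t : ℕ) where
  num : Vars s t → MvPowerSeries (Vars (m + s) (n + t)) K
  den : Vars s t → MvPowerSeries (Vars (m + s) (n + t)) K
  stage : Vars s t → ℕ
  num_sep : ∀ v, IsSepSeries K E (num v)
  den_sep : ∀ v, IsSepSeries K E (den v)
  num_dep : ∀ v, SupportedOn K (num v)
    (Set.range (inclVars (m := m) (n := n) (s := s) (t := t)) ∪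
      newVars '' {w | stage w < stage v})
  den_dep : ∀ v, SupportedOn K (den v)
    (Set.range (inclVars (m := m) (n := n) (s := s) (t := t)) ∪
      newVars '' {w | stage w < stage v})

namespace GenFracPres

variable {K} {E : Subring K} {m n s t : ℕ} (P : GenFracPres K E m n s t)

/-- The set of points of the full variable space which realize the presentation:
they lie in the polydisc, each new coordinate is the prescribed fraction, and each
denominator is nonzero there; this is the semianalytic set `X` associated to the
presentation `B = S_{m+s,n+t}/J`. -/
def lift : Set (Vars (m + s) (n + t) → K) :=
  {q | q ∈ MixedPolydisc K (m + s) (n + t) ∧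
    ∀ v : Vars s t, evalPS K (P.den v) q * q (newVars v) = evalPS K (P.num v) q ∧
      evalPS K (P.den v) q ≠ 0}

/-- Projection to the original coordinates. -/
def proj (_P : GenFracPres K E m n s t) :
    (Vars (m + s) (n + t) → K) → (Vars m n → K) := fun q => q ∘ inclVars

/-- `Dom_{m,n} B`: the domain of the generalized ring of fractions. -/
def Dom : Set (Vars m n → K) := P.proj '' P.lift

/-- The defining relation `g_v · X_v − f_v` of the new variable `v`. -/
def rel (v : Vars s t) : MvPowerSeries (Vars (m + s) (n + t)) K :=
  P.den v * MvPowerSeries.X (newVars v) - P.num v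

/-- The ideal of relations `J ⊆ S_{m+s,n+t}`, so that `B = S_{m+s,n+t}/J`. -/
def relIdeal : Ideal ↥(SRing K E (m + s) (n + t)) :=
  Ideal.span {F | (F : MvPowerSeries (Vars (m + s) (n + t)) K) ∈ Set.range P.rel}

/-- `Dom_{m,n} B ∩ V(I)_K` for an ideal `I` (given by the ideal of `S_{m+s,n+t}` of all
representatives of members of `I`). -/
def VDom (I : Ideal ↥(SRing K E (m + s) (n + t))) : Set (Vars m n → K) :=
  P.proj '' {q | q ∈ P.lift ∧
    ∀ F ∈ I, evalPS K (F : MvPowerSeries (Vars (m + s) (n + t)) K) q = 0}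

/-- The set of elements of `S_{m+s,n+t}` vanishing identically on (the part of the lifted
set over) `Y`; the corresponding ideal of `B` is `𝕀(Y)` for `Y ⊆ Dom_{m,n} B`. -/
def vanishSet (Y : Set (Vars m n → K)) : Set ↥(SRing K E (m + s) (n + t)) :=
  {F | ∀ q ∈ P.lift, P.proj q ∈ Y →
    evalPS K (F : MvPowerSeries (Vars (m + s) (n + t)) K) q = 0}

/-- The presentation is an `R`-domain presentation: the new variables adjoined at a common
stage share a common denominator `g`, and at each stage the ideal generated by `g` and the
numerators of that stage is the unit ideal of the previously constructed ring. -/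
def IsRPres : Prop :=
  (∀ v w, P.stage v = P.stage w → P.den v = P.den w) ∧
  ∀ v, Ideal.span {F : ↥(SRing K E (m + s) (n + t)) |
      (∃ w, P.stage w < P.stage v ∧ (F : MvPowerSeries (Vars (m + s) (n + t)) K) = P.rel w) ∨
      (F : MvPowerSeries (Vars (m + s) (n + t)) K) = P.den v ∨
      ∃ w, P.stage w = P.stage v ∧
        (F : MvPowerSeries (Vars (m + s) (n + t)) K) = P.num w} = ⊤

end GenFracPres

/-- A `D`-semianalytic subset of `(K°)^m × (K°°)^n`: a finite union of sets
`Dom_{m,n} B_i ∩ V(I_i)_K`. -/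
def IsDSemianalytic (E : Subring K) {m n : ℕ} (X : Set (Vars m n → K)) : Prop :=
  ∃ (k : ℕ) (s t : Fin k → ℕ) (P : ∀ i, GenFracPres K E m n (s i) (t i))
    (I : ∀ i, Ideal ↥(SRing K E (m + s i) (n + t i))),
    X = ⋃ i, (P i).VDom (I i)

/-- A subanalytic subset of `(K°)^m × (K°°)^n`: the image of a `D`-semianalytic set
under a coordinate projection. -/
def IsSubanalytic (E : Subring K) {m n : ℕ} (X : Set (Vars m n → K)) : Prop :=
  ∃ (M N : ℕ) (Y : Set (Vars (m + M) (n + N) → K)),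
    IsDSemianalytic K E Y ∧ X = (fun q => q ∘ inclVars) '' Y


/-- There is a coordinate projection onto `d` coordinates under which the image of `X`
has an interior point. -/
def HasDimWitness {m n : ℕ} (X : Set (Vars m n → K)) (d : ℕ) : Prop :=
  ∃ s : Finset (Vars m n), s.card = d ∧
    (interior ((fun p (v : {x // x ∈ s}) => p ↑v) '' X)).Nonempty

/-- There is a coordinate projection onto `d` coordinates under which the image of `X`
is somewhere dense. -/
def HasDenseWitness {m n : ℕ} (X : Set (Vars m n → K)) (d : ℕ) : Prop :=
  ∃ s : Finset (Vars m n), s.card = d ∧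
    (interior (closure ((fun p (v : {x // x ∈ s}) => p ↑v) '' X))).Nonempty

/-- The geometric dimension of `X` (with `g-dim ∅ = ⊥`, playing the role of `-1`). -/
def gdim {m n : ℕ} (X : Set (Vars m n → K)) : WithBot ℕ∞ :=
  sSup {d : WithBot ℕ∞ | ∃ k : ℕ, d = (k : ℕ∞) ∧ HasDimWitness K X k}

/-- The weak dimension of `X` (with `w-dim ∅ = ⊥`, playing the role of `-1`). -/
def wdim {m n : ℕ} (X : Set (Vars m n → K)) : WithBot ℕ∞ :=
  sSup {d : WithBot ℕ∞ | ∃ k : ℕ, d = (k : ℕ∞) ∧ HasDenseWitness K X k}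

/-- `X` (with the subspace topology) is a `d`-dimensional `K`-analytic manifold: it
admits an atlas of charts which are homeomorphisms onto open subsets of `K^d` whose
transition maps are locally given by convergent power series over `K`. -/
def IsKAnalyticManifold {P : Type} [TopologicalSpace P] (X : Set P) (d : ℕ) : Prop :=
  ∃ (ι : Type) (U : ι → Set X) (φ : ι → X → (Fin d → K)),
    (∀ x : X, ∃ i, x ∈ U i) ∧
    (∀ i, IsOpen (U i)) ∧
    (∀ i, ∃ V : Set (Fin d → K), IsOpen V ∧ Set.BijOn (φ i) (U i) V ∧
      ContinuousOn (φ i) (U i) ∧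
      ∃ ψ : (Fin d → K) → X, Set.InvOn ψ (φ i) (U i) V ∧ ContinuousOn ψ V) ∧
    ∀ i j, ∀ x ∈ U i ∩ U j, ∃ r > (0 : ℝ), ∃ F : Fin d → MvPowerSeries (Fin d) K,
      ∀ z ∈ U i ∩ U j, (∀ l, ‖φ i z l - φ i x l‖ < r) →
        ∀ l, φ j z l = evalPS K (F l) fun w => φ i z w - φ i x w

/-- Glue a parameter point `p ∈ (K°)^m × (K°°)^n` and a fiber point
`q ∈ (K°)^M × (K°°)^N` into a point of `(K°)^{m+M} × (K°°)^{n+N}`. -/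
def glue {m n M N : ℕ} (p : Vars m n → K) (q : Vars M N → K) :
    Vars (m + M) (n + N) → K :=
  Sum.elim (Fin.addCases (fun i => p (Sum.inl i)) fun i => q (Sum.inl i))
           (Fin.addCases (fun j => p (Sum.inr j)) fun j => q (Sum.inr j))

/-- The fiber `X(p)` of `X ⊆ (K°)^{m+M} × (K°°)^{n+N}` over the parameter point `p`. -/
def fiberAt {m n M N : ℕ} (X : Set (Vars (m + M) (n + N) → K)) (p : Vars m n → K) :
    Set (Vars M N → K) := {q | glue K p q ∈ X}

/-- The distinguished coordinate of the line `K°` (as the space `(K°)^1 × (K°°)^0`). -/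
def fibCoord : Vars 1 0 := Sum.inl 0

/-- A disc in `K°`: an open or closed ball whose center lies in `K°` and whose radius
belongs to the divisible hull `√|K°|` of the value group. -/
def IsDisc (D : Set (Vars 1 0 → K)) : Prop :=
  ∃ (a : K) (r : ℝ), ‖a‖ ≤ 1 ∧ (∃ (x : K) (k : ℕ), x ≠ 0 ∧ 0 < k ∧ r ^ k = ‖x‖) ∧
    (D = {p | ‖p (fibCoord) - a‖ < r ∧ ‖p (fibCoord)‖ ≤ 1} ∨
     D = {p | ‖p (fibCoord) - a‖ ≤ r ∧ ‖p (fibCoord)‖ ≤ 1})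

/-- A `K`-rational special set: a disc minus a finite union of discs. -/
def IsSpecialSet (S : Set (Vars 1 0 → K)) : Prop :=
  ∃ (D : Set (Vars 1 0 → K)) (k : ℕ) (Ds : Fin k → Set (Vars 1 0 → K)),
    IsDisc K D ∧ (∀ i, IsDisc K (Ds i)) ∧ S = D \ ⋃ i, Ds i

/-- The complexity of (a `K`-rational `R`-domain) `X ⊆ K°`: the least value of
`r + s₁ + ⋯ + s_r` over all decompositions `X = ∪_{i=1}^r (C_i ∖ ∪_{j=1}^{s_i} C_{ij})`
into `K`-rational special sets. -/
def complexity (X : Set (Vars 1 0 → K)) : ℕ∞ :=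
  sInf {c : ℕ∞ | ∃ (r : ℕ) (C : Fin r → Set (Vars 1 0 → K)) (sn : Fin r → ℕ)
    (Ds : ∀ i, Fin (sn i) → Set (Vars 1 0 → K)),
    (∀ i, IsDisc K (C i)) ∧ (∀ i j, IsDisc K (Ds i j)) ∧
    X = ⋃ i, (C i \ ⋃ j, Ds i j) ∧ c = (r : ℕ∞) + ∑ i, (sn i : ℕ∞)}

/-- A semialgebraic subset of `(K°)^m × (K°°)^n`: a finite union of sets defined by
finitely many strict and non-strict norm inequalities between polynomials over `K`. -/
def IsSemialgebraic {m n : ℕ} (X : Set (Vars m n → K)) : Prop :=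
  ∃ (k : ℕ) (a b : Fin k → ℕ)
    (f g : ∀ i, Fin (a i) → MvPolynomial (Vars m n) K)
    (f' g' : ∀ i, Fin (b i) → MvPolynomial (Vars m n) K),
    X = ⋃ i, {p | p ∈ MixedPolydisc K m n ∧
      (∀ j, ‖MvPolynomial.eval p (f i j)‖ < ‖MvPolynomial.eval p (g i j)‖) ∧
      ∀ j, ‖MvPolynomial.eval p (f' i j)‖ ≤ ‖MvPolynomial.eval p (g' i j)‖}


---- part 4 ----

open Classical in
/-- The number of irreducible components of one piece `Dom_{m,n} B ∩ V(I)_K` of a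
presentation: the number of primes in the irredundant prime decomposition of
`𝕀(Dom_{m,n} B ∩ V(I)_K)` (equivalently, of its minimal prime divisors, the ideal
being radical). -/
def icCount {E : Subring K} {m n s t : ℕ} (P : GenFracPres K E m n s t)
    (I : Ideal ↥(SRing K E (m + s) (n + t))) : ℕ∞ :=
  sInf {c : ℕ∞ | ∃ J : Ideal ↥(SRing K E (m + s) (n + t)),
    (J : Set ↥(SRing K E (m + s) (n + t))) = P.vanishSet (P.VDom I) ∧
    c = (J.minimalPrimes.ncard : ℕ∞)}

/-- `#ic X`: the infimum over presentations of `X` of the total number of irreducible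
components of the pieces. -/
def numIC (E : Subring K) {m n : ℕ} (X : Set (Vars m n → K)) : ℕ∞ :=
  sInf {c : ℕ∞ | ∃ (k : ℕ) (s t : Fin k → ℕ) (P : ∀ i, GenFracPres K E m n (s i) (t i))
    (I : ∀ i, Ideal ↥(SRing K E (m + s i) (n + t i))),
    X = ⋃ i, (P i).VDom (I i) ∧ c = ∑ i, icCount K (P i) (I i)}

open Classical in
/-- The piece number `pn X` of a `D`-semianalytic set: the infimum over all dimensional
filterings `𝒮 = (S_d,…,S_0)` of `X` (where `d = g-dim X` and each `S_i` is a finite union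
of `i`-dimensional `D`-semianalytic `K`-analytic manifolds, with `X = S_d ∪ ⋯ ∪ S_0`)
of `pn 𝒮 = Σ_i #ic S_i`; with `pn ∅ = 0`. -/
def pieceNumber (E : Subring K) {m n : ℕ} (X : Set (Vars m n → K)) : ℕ∞ :=
  if X = ∅ then 0 else
  sInf {c : ℕ∞ | ∃ d : ℕ, gdim K X = ((d : ℕ∞) : WithBot ℕ∞) ∧
    ∃ Ss : Fin (d + 1) → Set (Vars m n → K),
      X = ⋃ i, Ss i ∧
      (∀ i : Fin (d + 1), ∃ (k : ℕ) (Ms : Fin k → Set (Vars m n → K)),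
        Ss i = ⋃ j, Ms j ∧ ∀ j, IsDSemianalytic K E (Ms j) ∧
          IsKAnalyticManifold K (Ms j) (i : ℕ)) ∧
      c = ∑ i, numIC K E (Ss i)}

/-- `X` is a `K`-rational `R`-domain in `K°`. -/
def IsKRationalRDomain (E : Subring K) (X : Set (Vars 1 0 → K)) : Prop :=
  ∃ (s t : ℕ) (P : GenFracPres K E 1 0 s t), P.IsRPres ∧ X = P.Dom

/-- The position of a variable within its sort. -/
def varIdx {m n : ℕ} : Vars m n → ℕ := Sum.elim Fin.val Fin.val

open Classical in
/-- `φ` is an elementary Weierstrass change of variables among the variables in `T`: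
for a chosen variable `j ∈ T` and positive exponents `r`, it acts on separated power
series as the substitution sending `v ↦ v + j^{r v}` for the variables `v ∈ T` preceding
`j` and fixing all other variables; we characterize it through its effect on the
associated functions on the polydisc. -/
def IsElemWMove {M N : ℕ} (E : Subring K) (T : Set (Vars M N))
    (φ : ↥(SRing K E M N) ≃ₐ[K] ↥(SRing K E M N)) : Prop :=
  ∃ (j : Vars M N) (r : Vars M N → ℕ), j ∈ T ∧ (∀ v, 0 < r v) ∧
    ∀ (f : ↥(SRing K E M N)), ∀ q ∈ MixedPolydisc K M N,
      evalPS K ((φ f : ↥(SRing K E M N)) : MvPowerSeries (Vars M N) K) q =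
        evalPS K ((f : ↥(SRing K E M N)) : MvPowerSeries (Vars M N) K)
          (fun v => if v ∈ T ∧ Sum.isLeft v = Sum.isLeft j ∧ varIdx v < varIdx j
            then q v + q j ^ r v else q v)

/-- `φ` is a (composite) Weierstrass change of variables, each elementary move taking
place among one of the groups of variables listed in `Ts` (so the sorts of variables are
changed separately). -/
inductive IsWChange {M N : ℕ} (E : Subring K) (Ts : Set (Set (Vars M N))) :
    (↥(SRing K E M N) ≃ₐ[K] ↥(SRing K E M N)) → Prop
  | refl : IsWChange E Ts AlgEquiv.refl
  | step {φ ψ : ↥(SRing K E M N) ≃ₐ[K] ↥(SRing K E M N)} (T : Set (Vars M N)) :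
      T ∈ Ts → IsElemWMove K E T φ → IsWChange E Ts ψ → IsWChange E Ts (φ.trans ψ)


---- part 5 ----

/-- "`A ⊆ R/J` is a finite inclusion", finiteness part: `R/J` is generated as a module
over (the image of) `A` by finitely many elements. -/
def FiniteOver {R : Type} [CommRing R] (A : Set R) (J : Ideal R) : Prop :=
  ∃ (k : ℕ) (c : Fin k → R), ∀ z : R, ∃ a : Fin k → R,
    (∀ i, a i ∈ A) ∧ z - ∑ i, a i * c i ∈ J

/-- "`A ⊆ R/J` is a finite inclusion", injectivity part: `A` meets `J` trivially. -/
def InjOver {R : Type} [CommRing R] (A : Set R) (J : Ideal R) : Prop :=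
  ∀ x ∈ A, x ∈ J → x = 0

/-- The parameter variables: the first `m₀` of the base `x`-variables, the first `n₀` of
the base `ρ`-variables, and the adjoined variables marked as parameters by `pv`. -/
def paramVars (m₀ n₀ : ℕ) {m n s t : ℕ} (pv : Set (Vars s t)) :
    Set (Vars (m + s) (n + t)) :=
  {v | (∃ i : Fin m, v = inclVars (Sum.inl i) ∧ (i : ℕ) < m₀) ∨
       (∃ j : Fin n, v = inclVars (Sum.inr j) ∧ (j : ℕ) < n₀) ∨
       ∃ w ∈ pv, v = newVars w}

/-- The group of all `x`-type variables (base parameter `x`-variables together with the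
adjoined parameter variables of `x`-sort). -/
def xGroup (m₀ : ℕ) {m n s t : ℕ} (pv : Set (Vars s t)) : Set (Vars (m + s) (n + t)) :=
  {v | (∃ i : Fin m, v = inclVars (Sum.inl i) ∧ (i : ℕ) < m₀) ∨
       ∃ w ∈ pv, (∃ i : Fin s, w = Sum.inl i) ∧ v = newVars w}

/-- The group of all `y`-type variables. -/
def yGroup (m₀ : ℕ) {m n s t : ℕ} (pv : Set (Vars s t)) : Set (Vars (m + s) (n + t)) :=
  {v | (∃ i : Fin m, v = inclVars (Sum.inl i) ∧ m₀ ≤ (i : ℕ)) ∨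
       ∃ w ∈ {w | w ∉ pv}, (∃ i : Fin s, w = Sum.inl i) ∧ v = newVars w}

/-- The group of all `ρ`-type variables. -/
def rhoGroup (n₀ : ℕ) {m n s t : ℕ} (pv : Set (Vars s t)) : Set (Vars (m + s) (n + t)) :=
  {v | (∃ j : Fin n, v = inclVars (Sum.inr j) ∧ (j : ℕ) < n₀) ∨
       ∃ w ∈ pv, (∃ j : Fin t, w = Sum.inr j) ∧ v = newVars w}

/-- The group of all `λ`-type variables. -/
def lamGroup (n₀ : ℕ) {m n s t : ℕ} (pv : Set (Vars s t)) : Set (Vars (m + s) (n + t)) :=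
  {v | (∃ j : Fin n, v = inclVars (Sum.inr j) ∧ n₀ ≤ (j : ℕ)) ∨
       ∃ w ∈ {w | w ∉ pv}, (∃ j : Fin t, w = Sum.inr j) ∧ v = newVars w}

/-- The rank of a variable within a group of variables of the same sort. -/
def groupRank {M N : ℕ} (G : Set (Vars M N)) (v : Vars M N) : ℕ :=
  {w ∈ G | varIdx w < varIdx v}.ncard

/-- The first `k` variables of a group. -/
def firstOf {M N : ℕ} (G : Set (Vars M N)) (k : ℕ) : Set (Vars M N) :=
  {v ∈ G | groupRank G v < k}

variable {K}

/-- The presentation respects the parameter structure: the fractions defining the adjoined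
parameter variables (those marked by `pv`) are built up from parameter variables only. -/
def GenFracPres.RespectsParams {E : Subring K} {m n s t : ℕ}
    (P : GenFracPres K E m n s t) (m₀ n₀ : ℕ) (pv : Set (Vars s t)) : Prop :=
  ∀ v ∈ pv, SupportedOn K (P.num v) (paramVars m₀ n₀ pv) ∧
    SupportedOn K (P.den v) (paramVars m₀ n₀ pv)

end DSemi

/-! The new coordinates are determined stage by stage by the old ones: iterating
`q ↦ (p, (f_v(q) / g_v(q))_v)` more often than there are stages produces, from any starting
point, one and the same fixed point, so a point of `X` is determined by its projection.
Started at a point `q₀ ∈ X`, every iterate depends continuously on `p` near `π q₀`, because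
separated power series are Lipschitz on the polydisc (an ultrametric estimate on the monomials)
and the denominators do not vanish at `q₀`; since the polydisc is open, the iterate stays in
`X` for `p` near `π q₀`. Hence `π` is an open embedding of `X` into `K^{m+n}`, i.e. a single
global chart, whose transition map is the identity. -/

namespace DSemi

open Set Function

variable {K : Type}

section Vars

variable {m n s t : ℕ}

lemma forall_inclVars_newVars {p : Vars (m + s) (n + t) → Prop} :
    (∀ u, p u) ↔ (∀ w, p (inclVars w)) ∧ ∀ v, p (newVars v) := by
  refine ⟨fun h => ⟨fun w => h _, fun v => h _⟩, fun ⟨hw, hv⟩ => ?_⟩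
  rintro (i | j)
  · induction i using Fin.addCases with
    | left i => exact hw (.inl i)
    | right i => exact hv (.inl i)
  · induction j using Fin.addCases with
    | left j => exact hw (.inr j)
    | right j => exact hv (.inr j)

@[simp] lemma glue_inclVars (p : Vars m n → K) (r : Vars s t → K) (w : Vars m n) :
    glue K p r (inclVars w) = p w := by
  cases w <;> simp [glue, inclVars]

@[simp] lemma glue_newVars (p : Vars m n → K) (r : Vars s t → K) (v : Vars s t) :
    glue K p r (newVars v) = r v := by
  cases v <;> simp [glue, newVars]

end Vars

variable [NontriviallyNormedField K]

lemma norm_le_one_of_mem_mixedPolydisc {M N : ℕ} {q : Vars M N → K}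
    (hq : q ∈ MixedPolydisc K M N) : ∀ u, ‖q u‖ ≤ 1
  | .inl i => hq.1 i
  | .inr j => (hq.2 j).le

lemma isOpen_mixedPolydisc [IsUltrametricDist K] {M N : ℕ} :
    IsOpen (MixedPolydisc K M N) := by
  have hle : IsOpen {x : K | ‖x‖ ≤ 1} := by
    simpa [Metric.closedBall] using IsUltrametricDist.isOpen_closedBall (0 : K) one_ne_zero
  have hlt : IsOpen {x : K | ‖x‖ < 1} := by
    simpa [Metric.ball] using Metric.isOpen_ball (x := (0 : K)) (ε := 1)
  have hdisc : MixedPolydisc K M N =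
      (⋂ i : Fin M, (fun p : Vars M N → K => p (.inl i)) ⁻¹' {x | ‖x‖ ≤ 1}) ∩
        ⋂ j : Fin N, (fun p : Vars M N → K => p (.inr j)) ⁻¹' {x | ‖x‖ < 1} := by
    ext; simp [MixedPolydisc]
  rw [hdisc]
  exact (isOpen_iInter_of_finite fun i => hle.preimage (continuous_apply (Sum.inl i))).inter
    (isOpen_iInter_of_finite fun j => hlt.preimage (continuous_apply (Sum.inr j)))

lemma norm_prod_pow_le_one {σ : Type} {q : σ → K} (hq : ∀ u, ‖q u‖ ≤ 1) (s : Finset σ)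
    (e : σ → ℕ) : ‖∏ i ∈ s, q i ^ e i‖ ≤ 1 := by
  rw [norm_prod]
  exact Finset.prod_le_one (fun _ _ => norm_nonneg _) fun i _ => by
    rw [norm_pow]; exact pow_le_one₀ (norm_nonneg _) (hq i)

lemma norm_finsuppProd_pow_le {σ : Type} {q : σ → K} (hq : ∀ u, ‖q u‖ ≤ 1) (d : σ →₀ ℕ)
    (u : σ) : ‖d.prod fun i k => q i ^ k‖ ≤ ‖q u‖ ^ d u := by
  classical
  by_cases hu : u ∈ d.support
  · rw [Finsupp.prod, ← Finset.mul_prod_erase _ _ hu, norm_mul, norm_pow]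
    exact mul_le_of_le_one_right (by positivity) (norm_prod_pow_le_one hq _ _)
  · rw [Finsupp.notMem_support_iff.1 hu, pow_zero]
    exact norm_prod_pow_le_one hq _ _

lemma finite_setOf_forall_lt {ι : Type} [Finite ι] (D : ι → ℕ) :
    {e : ι →₀ ℕ | ∀ j, e j < D j}.Finite :=
  ((Set.Finite.pi' fun j => Set.finite_Iio (D j)).preimage
    Finsupp.equivFunOnFinite.injective.injOn).subset fun _ he => he

/-- The terms are small once some `ρ`-exponent is large, since `‖ρ‖ < 1`; for each of the
finitely many remaining `ρ`-exponents, the coefficients tend to zero in the `x`-exponents. -/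
lemma tendsto_coeff_mul_prod_pow {M N : ℕ} {f : MvPowerSeries (Vars M N) K} {C : ℝ}
    (hC : ∀ d, ‖MvPowerSeries.coeff d f‖ ≤ C)
    (hf : ∀ dρ : Fin N →₀ ℕ, Tendsto (fun dx : Fin M →₀ ℕ =>
      MvPowerSeries.coeff (Finsupp.sumElim dx dρ) f) cofinite (𝓝 0))
    {q : Vars M N → K} (hq : q ∈ MixedPolydisc K M N) :
    Tendsto (fun d => MvPowerSeries.coeff d f * d.prod fun i k => q i ^ k) cofinite (𝓝 0) := by
  refine Metric.tendsto_nhds.2 fun ε hε => eventually_cofinite.2 ?_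
  simp only [dist_zero_right, not_lt, norm_mul]
  have hq1 := norm_le_one_of_mem_mixedPolydisc hq
  have hsmall : ∀ j : Fin N, ∀ᶠ k in atTop, C * ‖q (.inr j)‖ ^ k < ε := fun j => by
    have := (tendsto_pow_atTop_nhds_zero_of_lt_one (norm_nonneg _) (hq.2 j)).const_mul C
    rw [mul_zero] at this
    exact this.eventually (gt_mem_nhds hε)
  choose D hD using fun j => eventually_atTop.1 (hsmall j)
  have hfiber : ∀ dρ, {dx | ε ≤ ‖MvPowerSeries.coeff (Finsupp.sumElim dx dρ) f‖}.Finite :=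
    fun dρ => by
      simpa using eventually_cofinite.1 ((hf dρ).norm.eventually (gt_mem_nhds (by simpa)))
  refine ((finite_setOf_forall_lt D).biUnion fun dρ _ =>
    (hfiber dρ).image fun dx => Finsupp.sumElim dx dρ).subset fun d hd => ?_
  let e := Finsupp.sumFinsuppEquivProdFinsupp (α := Fin M) (β := Fin N) (γ := ℕ)
  have hde : Finsupp.sumElim (e d).1 (e d).2 = d := e.symm_apply_apply d
  have hcoeff : ε ≤ ‖MvPowerSeries.coeff d f‖ :=
    hd.trans (mul_le_of_le_one_right (norm_nonneg _) (norm_prod_pow_le_one hq1 _ _))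
  simp only [mem_iUnion, mem_image, mem_ofPred_eq]
  refine ⟨(e d).2, fun j => ?_, (e d).1, by rwa [hde], hde⟩
  by_contra! hj
  have hterm := hd.trans (mul_le_mul (hC d) (norm_finsuppProd_pow_le hq1 d (.inr j))
    (norm_nonneg _) ((norm_nonneg _).trans (hC d)))
  exact (hD j _ hj).not_ge hterm

section Ultrametric

variable [IsUltrametricDist K]

lemma norm_prod_sub_prod_le {ι : Type} (s : Finset ι) {x y : ι → K} {η : ℝ} (hη : 0 ≤ η)
    (hx : ∀ i ∈ s, ‖x i‖ ≤ 1) (hy : ∀ i ∈ s, ‖y i‖ ≤ 1) (hxy : ∀ i ∈ s, ‖x i - y i‖ ≤ η) :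
    ‖∏ i ∈ s, x i - ∏ i ∈ s, y i‖ ≤ η := by
  classical
  induction s using Finset.induction_on with
  | empty => simpa using hη
  | insert a s ha ih =>
    simp only [Finset.mem_insert, forall_eq_or_imp] at hx hy hxy
    rw [Finset.prod_insert ha, Finset.prod_insert ha,
      show x a * ∏ i ∈ s, x i - y a * ∏ i ∈ s, y i =
        x a * (∏ i ∈ s, x i - ∏ i ∈ s, y i) + (x a - y a) * ∏ i ∈ s, y i by ring]
    refine (IsUltrametricDist.norm_add_le_max _ _).trans (max_le ?_ ?_) <;> rw [norm_mul]
    · exact (mul_le_of_le_one_left (norm_nonneg _) hx.1).trans (ih hx.2 hy.2 hxy.2)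
    · refine (mul_le_of_le_one_right (norm_nonneg _) ?_).trans hxy.1
      rw [norm_prod]
      exact Finset.prod_le_one (fun _ _ => norm_nonneg _) hy.2

lemma norm_pow_sub_pow_le {x y : K} (hx : ‖x‖ ≤ 1) (hy : ‖y‖ ≤ 1) (k : ℕ) :
    ‖x ^ k - y ^ k‖ ≤ ‖x - y‖ := by
  simpa using norm_prod_sub_prod_le (Finset.range k) (x := fun _ => x) (y := fun _ => y)
    (norm_nonneg _) (fun _ _ => hx) (fun _ _ => hy) fun _ _ => le_rfl

lemma norm_le_one_of_mem_genSubring {E : Subring K} (hE : ∀ x ∈ E, ‖x‖ ≤ 1) {a : ℕ → K}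
    (ha : ∀ i, ‖a i‖ ≤ 1) {x : K} (hx : x ∈ genSubring K E a) : ‖x‖ ≤ 1 := by
  induction hx using Subring.closure_induction with
  | mem x hx => rcases hx with hx | ⟨i, rfl⟩; exacts [hE x hx, ha i]
  | zero => simp
  | one => simp
  | add x y _ _ hx hy => exact (IsUltrametricDist.norm_add_le_max x y).trans (max_le hx hy)
  | neg x _ hx => rwa [norm_neg]
  | mul x y _ _ hx hy => rw [norm_mul]; exact mul_le_one₀ hx (norm_nonneg y) hy

lemma norm_le_one_of_mem_ringB {E : Subring K} (hE : ∀ x ∈ E, ‖x‖ ≤ 1) {a : ℕ → K}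
    (ha : ∀ i, ‖a i‖ ≤ 1) {x : K} (hx : x ∈ ringB K E a) : ‖x‖ ≤ 1 := by
  have hloc : (locSubring K E a : Set K) ⊆ {x | ‖x‖ ≤ 1} := by
    rintro x ⟨b, hb, u, -, hu, hxu⟩
    have hnorm : ‖x‖ = ‖b‖ := by rw [← hxu, norm_mul, hu, mul_one]
    exact hnorm.trans_le (norm_le_one_of_mem_genSubring hE ha hb)
  exact closure_minimal hloc (isClosed_le continuous_norm continuous_const) hx

end Ultrametric

section SeparatedSeries

variable [IsUltrametricDist K] {E : Subring K} (hE : ∀ x ∈ E, ‖x‖ ≤ 1) {M N : ℕ}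
  {f : MvPowerSeries (Vars M N) K}
include hE

lemma IsSepSeries.exists_norm_coeff_le (hf : IsSepSeries K E f) :
    ∃ C : NNReal, ∀ d, ‖MvPowerSeries.coeff d f‖ ≤ C := by
  obtain ⟨c, a, ha, hcoeff, -⟩ := hf
  refine ⟨‖c‖₊, fun d => ?_⟩
  obtain ⟨b, hb, hd⟩ := hcoeff d
  rw [hd, norm_mul, coe_nnnorm]
  exact mul_le_of_le_one_right (norm_nonneg c) (norm_le_one_of_mem_ringB hE ha.1 hb)

variable [CompleteSpace K]

lemma IsSepSeries.summable (hf : IsSepSeries K E f) {q : Vars M N → K}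
    (hq : q ∈ MixedPolydisc K M N) :
    Summable fun d => MvPowerSeries.coeff d f * d.prod fun i k => q i ^ k := by
  obtain ⟨C, hC⟩ := hf.exists_norm_coeff_le hE
  obtain ⟨-, -, -, -, hcof⟩ := hf
  exact NonarchimedeanAddGroup.summable_of_tendsto_cofinite_zero
    (tendsto_coeff_mul_prod_pow hC hcof hq)

lemma IsSepSeries.exists_lipschitzOnWith (hf : IsSepSeries K E f) :
    ∃ C, LipschitzOnWith C (evalPS K f) (MixedPolydisc K M N) := by
  obtain ⟨C, hC⟩ := hf.exists_norm_coeff_le hE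
  refine ⟨C, LipschitzOnWith.of_dist_le_mul fun q hq q' hq' => ?_⟩
  rw [dist_eq_norm, evalPS, evalPS, ← (hf.summable hE hq).tsum_sub (hf.summable hE hq')]
  refine IsUltrametricDist.norm_tsum_le_of_forall_le_of_nonneg (by positivity) fun d => ?_
  have h1 := norm_le_one_of_mem_mixedPolydisc hq
  have h1' := norm_le_one_of_mem_mixedPolydisc hq'
  rw [← mul_sub, norm_mul]
  refine mul_le_mul (hC d) (norm_prod_sub_prod_le _ dist_nonneg
    (fun i _ => (norm_pow _ _).trans_le (pow_le_one₀ (norm_nonneg _) (h1 i)))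
    (fun i _ => (norm_pow _ _).trans_le (pow_le_one₀ (norm_nonneg _) (h1' i)))
    fun i _ => ?_) (norm_nonneg _) C.coe_nonneg
  exact (norm_pow_sub_pow_le (h1 i) (h1' i) _).trans
    ((dist_eq_norm (q i) (q' i)).symm.le.trans (dist_le_pi_dist q q' i))

lemma IsSepSeries.continuousAt_evalPS (hf : IsSepSeries K E f) {q : Vars M N → K}
    (hq : q ∈ MixedPolydisc K M N) : ContinuousAt (evalPS K f) q :=
  (hf.exists_lipschitzOnWith hE).choose_spec.continuousOn.continuousAt
    (isOpen_mixedPolydisc.mem_nhds hq)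

end SeparatedSeries

lemma evalPS_congr {σ : Type} {f : MvPowerSeries σ K} {S : Set σ} (hf : SupportedOn K f S)
    {q q' : σ → K} (h : EqOn q q' S) : evalPS K f q = evalPS K f q' := by
  refine tsum_congr fun d => ?_
  by_cases hc : MvPowerSeries.coeff d f = 0
  · simp [hc]
  · exact congrArg _ (Finsupp.prod_congr fun i hi => by rw [h (hf d hc hi)])

namespace GenFracPres

variable {E : Subring K} {m n s t : ℕ} (P : GenFracPres K E m n s t)

/-- One round of solving `g_v · x_v = f_v` for all new variables `x_v` at once. -/
def step (p : Vars m n → K) (q : Vars (m + s) (n + t) → K) : Vars (m + s) (n + t) → K :=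
  glue K p fun v => evalPS K (P.num v) q / evalPS K (P.den v) q

/-- The coordinates that `k + 1` rounds of `step` fix independently of the starting point. -/
def settledVars (k : ℕ) : Set (Vars (m + s) (n + t)) :=
  range inclVars ∪ newVars '' {v | P.stage v < k}

def height : ℕ := Finset.univ.sup P.stage + 1

lemma proj_iterate_step (p : Vars m n → K) (q : Vars (m + s) (n + t) → K) (k : ℕ) :
    P.proj ((P.step p)^[k + 1] q) = p := by
  rw [iterate_succ_apply']
  exact funext fun w => by simp [proj, step]

lemma settledVars_mono : Monotone P.settledVars := by
  rintro k k' hk u (hu | ⟨v, hv, rfl⟩)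
  exacts [.inl hu, .inr ⟨v, lt_of_lt_of_le hv hk, rfl⟩]

lemma settledVars_height : P.settledVars P.height = univ :=
  eq_univ_of_forall <| forall_inclVars_newVars.2 ⟨fun w => .inl ⟨w, rfl⟩,
    fun v => .inr ⟨v, Nat.lt_succ_of_le (Finset.le_sup (Finset.mem_univ v)), rfl⟩⟩

lemma eqOn_iterate_step (p : Vars m n → K) (k : ℕ) (q q' : Vars (m + s) (n + t) → K) :
    EqOn ((P.step p)^[k + 1] q) ((P.step p)^[k + 1] q') (P.settledVars k) := by
  induction k generalizing q q' with
  | zero =>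
    rintro _ (⟨w, rfl⟩ | ⟨v, hv, -⟩)
    · simp [step]
    · exact absurd hv (Nat.not_lt_zero _)
  | succ k ih =>
    rintro _ (⟨w, rfl⟩ | ⟨v, hv, rfl⟩)
    · simp only [iterate_succ_apply', step, glue_inclVars]
    · have hagree := (ih q q').mono (P.settledVars_mono (Nat.lt_succ_iff.1 hv))
      rw [iterate_succ_apply' _ (k + 1), iterate_succ_apply' _ (k + 1)]
      simp only [step, glue_newVars, evalPS_congr (P.num_dep v) hagree,
        evalPS_congr (P.den_dep v) hagree]

lemma iterate_step_height_eq (p : Vars m n → K) (q q' : Vars (m + s) (n + t) → K) :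
    (P.step p)^[P.height + 1] q = (P.step p)^[P.height + 1] q' :=
  funext fun u => P.eqOn_iterate_step p _ q q' (P.settledVars_height ▸ mem_univ u)

lemma isFixedPt_iterate_step_height (p : Vars m n → K) (q : Vars (m + s) (n + t) → K) :
    IsFixedPt (P.step p) ((P.step p)^[P.height + 1] q) := by
  rw [IsFixedPt, ← iterate_succ_apply' (P.step p), iterate_succ_apply]
  exact P.iterate_step_height_eq p _ q

lemma mem_lift_iff {q : Vars (m + s) (n + t) → K} :
    q ∈ P.lift ↔ q ∈ MixedPolydisc K (m + s) (n + t) ∧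
      (∀ v, evalPS K (P.den v) q ≠ 0) ∧ IsFixedPt (P.step (P.proj q)) q := by
  simp only [lift, mem_ofPred_eq, forall_and]
  refine and_congr_right fun _ => ⟨fun ⟨heq, hne⟩ => ⟨hne, ?_⟩, fun ⟨hne, hfix⟩ => ⟨?_, hne⟩⟩
  · refine funext (forall_inclVars_newVars.2 ⟨fun w => by simp [step, proj], fun v => ?_⟩)
    simp only [step, glue_newVars]
    rw [div_eq_iff (hne v), ← heq v, mul_comm]
  · intro v
    rw [← congrFun hfix (newVars v)]
    simp only [step, glue_newVars]
    exact mul_div_cancel₀ _ (hne v)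

lemma iterate_step_proj_eq_self {q : Vars (m + s) (n + t) → K} (hq : q ∈ P.lift) (k : ℕ) :
    (P.step (P.proj q))^[k] q = q :=
  (P.mem_lift_iff.1 hq).2.2.iterate k

lemma injOn_proj : InjOn P.proj P.lift := by
  intro q hq q' hq' h
  calc q = (P.step (P.proj q))^[P.height + 1] q := (P.iterate_step_proj_eq_self hq _).symm
    _ = (P.step (P.proj q'))^[P.height + 1] q' := by rw [h, P.iterate_step_height_eq _ q q']
    _ = q' := P.iterate_step_proj_eq_self hq' _

section Topology

variable [IsUltrametricDist K] [CompleteSpace K] (hE : ∀ x ∈ E, ‖x‖ ≤ 1)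
include hE

lemma continuousAt_step {q₀ : Vars (m + s) (n + t) → K}
    (hq₀ : q₀ ∈ MixedPolydisc K (m + s) (n + t)) (hden : ∀ v, evalPS K (P.den v) q₀ ≠ 0)
    (p₀ : Vars m n → K) : ContinuousAt (fun x => P.step x.1 x.2) (p₀, q₀) := by
  have hevalPS {f} (hf : IsSepSeries K E f) :
      ContinuousAt (fun x : (Vars m n → K) × _ => evalPS K f x.2) (p₀, q₀) :=
    show ContinuousAt (evalPS K f ∘ Prod.snd) _ from
      (hf.continuousAt_evalPS hE hq₀).comp continuousAt_snd
  refine continuousAt_pi.2 (forall_inclVars_newVars.2 ⟨fun w => ?_, fun v => ?_⟩)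
  · simp only [step, glue_inclVars]
    exact ((continuous_apply w).comp continuous_fst).continuousAt
  · simp only [step, glue_newVars]
    exact (hevalPS (P.num_sep v)).div (hevalPS (P.den_sep v)) (hden v)

lemma continuousAt_iterate_step {q₀ : Vars (m + s) (n + t) → K} (hq₀ : q₀ ∈ P.lift) (k : ℕ) :
    ContinuousAt (fun p => (P.step p)^[k] q₀) (P.proj q₀) := by
  obtain ⟨hpoly, hden, -⟩ := P.mem_lift_iff.1 hq₀
  induction k with
  | zero => exact continuousAt_const
  | succ k ih =>
    simp only [iterate_succ_apply']
    exact (P.continuousAt_step hE hpoly hden _).comp₂_of_eq continuousAt_id ih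
      (by rw [P.iterate_step_proj_eq_self hq₀ k])

lemma eventually_iterate_step_mem_lift {q₀ : Vars (m + s) (n + t) → K} (hq₀ : q₀ ∈ P.lift) :
    ∀ᶠ p in 𝓝 (P.proj q₀), (P.step p)^[P.height + 1] q₀ ∈ P.lift := by
  obtain ⟨hpoly, hden, -⟩ := P.mem_lift_iff.1 hq₀
  have hcont := P.continuousAt_iterate_step hE hq₀ (P.height + 1)
  have hval := P.iterate_step_proj_eq_self hq₀ (P.height + 1)
  have hpoly' : ∀ᶠ p in 𝓝 (P.proj q₀), (P.step p)^[P.height + 1] q₀ ∈ MixedPolydisc K _ _ :=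
    hcont.preimage_mem_nhds (by rw [hval]; exact isOpen_mixedPolydisc.mem_nhds hpoly)
  have hden' : ∀ᶠ p in 𝓝 (P.proj q₀), ∀ v,
      evalPS K (P.den v) ((P.step p)^[P.height + 1] q₀) ≠ 0 :=
    eventually_all.2 fun v =>
      (((P.den_sep v).continuousAt_evalPS hE hpoly).comp_of_eq hcont hval).eventually_ne
        (by rw [comp_apply, hval]; exact hden v)
  filter_upwards [hpoly', hden'] with p hp hpden
  refine P.mem_lift_iff.2 ⟨hp, hpden, ?_⟩
  rw [proj_iterate_step]
  exact P.isFixedPt_iterate_step_height p q₀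

lemma isOpenMap_domRestrict_proj : IsOpenMap (P.lift.domRestrict P.proj) := by
  refine isOpenMap_iff_nhds_le.2 fun ⟨q₀, hq₀⟩ S hS => ?_
  obtain ⟨W, hW, hWS⟩ := mem_nhds_subtype _ _ _ |>.1 (mem_map.1 hS)
  have hcont := P.continuousAt_iterate_step hE hq₀ (P.height + 1)
  have hval := P.iterate_step_proj_eq_self hq₀ (P.height + 1)
  filter_upwards [hcont.preimage_mem_nhds (by rwa [hval]),
    P.eventually_iterate_step_mem_lift hE hq₀] with p hpW hp
  have := hWS (show (⟨_, hp⟩ : P.lift).1 ∈ W from hpW)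
  rwa [mem_preimage, domRestrict_apply, proj_iterate_step] at this

lemma isOpenEmbedding_domRestrict_proj : IsOpenEmbedding (P.lift.domRestrict P.proj) :=
  .of_continuous_injective_isOpenMap
    (continuous_pi fun w => (continuous_apply (inclVars w)).comp continuous_subtype_val)
    P.injOn_proj.injective (P.isOpenMap_domRestrict_proj hE)

end Topology

end GenFracPres

lemma evalPS_C_add_X {d : ℕ} (c : K) (l : Fin d) (y : Fin d → K) :
    evalPS K (MvPowerSeries.C c + MvPowerSeries.X l) y = c + y l := by
  classical
  refine HasSum.tsum_eq ?_
  convert (hasSum_ite_eq 0 c).add (hasSum_ite_eq (Finsupp.single l 1) (y l)) using 1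
  funext e
  by_cases h0 : e = 0
  · subst h0
    simp [eq_comm (a := (0 : Fin d →₀ ℕ))]
  by_cases h1 : e = Finsupp.single l 1
  · subst h1
    simp [MvPowerSeries.coeff_C, h0]
  · simp [MvPowerSeries.coeff_C, MvPowerSeries.coeff_X, h0, h1]

lemma _root_.Topology.IsOpenEmbedding.isKAnalyticManifold {Y : Type} [TopologicalSpace Y]
    {X : Set Y} [Nonempty X] {d : ℕ} {φ : X → Fin d → K} (hφ : IsOpenEmbedding φ) :
    IsKAnalyticManifold K X d := by
  let e := hφ.toOpenPartialHomeomorph φ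
  refine ⟨Unit, fun _ => univ, fun _ => φ, fun x => ⟨(), trivial⟩, fun _ => isOpen_univ,
    fun _ => ⟨e.target, e.open_target, ?_, hφ.continuous.continuousOn, e.symm, ?_,
      e.continuousOn_symm⟩, fun _ _ x _ => ⟨1, one_pos,
        fun l => MvPowerSeries.C (φ x l) + MvPowerSeries.X l, fun z _ _ l => ?_⟩⟩
  · simpa [e] using e.bijOn
  · simpa [e] using e.invOn
  · rw [evalPS_C_add_X]
    ring

end DSemi

open DSemi in
theorem lift_bijective_and_manifold_general
    {K : Type} [NontriviallyNormedField K] [CompleteSpace K]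
    (hna : IsNonarchimedean (norm : K → ℝ))
    (E : Subring K) (hE : ∀ x ∈ E, ‖x‖ ≤ 1)
    {m n s t : ℕ} (P : GenFracPres K E m n s t) :
    Set.BijOn P.proj P.lift P.Dom ∧
    (P.lift.Nonempty → IsKAnalyticManifold K P.lift (m + n)) := by
  have := IsUltrametricDist.isUltrametricDist_of_isNonarchimedean_norm hna
  refine ⟨P.injOn_proj.bijOn_image, fun hne => ?_⟩
  have := hne.to_subtype
  exact ((Homeomorph.piCongrLeft (Y := fun _ => K) finSumFinEquiv).isOpenEmbedding.comp
    (P.isOpenEmbedding_domRestrict_proj hE)).isKAnalyticManifold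

open DSemi in
/-- For a generalized ring of fractions `B = S_{m+s,n+t}/J` over `S_{m,n}`, the coordinate
projection maps the semianalytic set
`X = V(J)_K ∩ {∏ g_i · ∏ g′_j ≠ 0} ⊆ (K°)^{m+s} × (K°°)^{n+t}` bijectively onto
`Dom_{m,n} B`, and if `X` is nonempty it is an `(m+n)`-dimensional `K`-analytic
manifold. -/
theorem lift_bijective_and_manifold
    {K : Type} [NontriviallyNormedField K] [CompleteSpace K]
    (hna : IsNonarchimedean (norm : K → ℝ))
    (E : Subring K) (hE : ∀ x ∈ E, ‖x‖ ≤ 1) (hEclosed : IsClosed (E : Set K))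
    {m n s t : ℕ} (P : GenFracPres K E m n s t) :
    Set.BijOn P.proj P.lift P.Dom ∧
    (P.lift.Nonempty → IsKAnalyticManifold K P.lift (m + n)) :=
  lift_bijective_and_manifold_general hna E hE P
end
end

section
/- Let K = ℚ((t)), the field of formal Laurent series over ℚ with the t-adic absolute value, so K° = ℚ[[t]]. Then the set of squares P₂ := {x ∈ K° : ∃ y ∈ K, y² = x} cannot be written as a finite boolean combination of discs in K°. -/
/- Example: over `K = ℚ((t))` with the `t`-adic absolute value (`K° = ℚ[[t]]`), the set of
squares in `K°` is not a finite boolean combination of discs. -/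

noncomputable section

namespace LaurentSquares

-- The `t`-adic absolute value on `ℚ((t))`: `|f| = 2^{-ord f}` for `f ≠ 0`, `|0| = 0`.
open Classical in
def tAbs (f : LaurentSeries ℚ) : ℝ :=
  if f = 0 then 0 else (2 : ℝ) ^ (-(HahnSeries.order f))

/-- The valuation ring `K° = ℚ[[t]]` of `ℚ((t))`. -/
def valRing : Set (LaurentSeries ℚ) := {f | tAbs f ≤ 1}

/-- A disc in `K° = ℚ[[t]]`: an open or closed ball with center in `K°` and radius in the
divisible hull `√|K°|` of the value group. -/
def IsDisc (D : Set (LaurentSeries ℚ)) : Prop :=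
  ∃ (a : LaurentSeries ℚ) (r : ℝ), tAbs a ≤ 1 ∧
    (∃ (x : LaurentSeries ℚ) (k : ℕ), x ≠ 0 ∧ 0 < k ∧ r ^ k = tAbs x) ∧
    (D = {f ∈ valRing | tAbs (f - a) < r} ∨ D = {f ∈ valRing | tAbs (f - a) ≤ r})

/-- Finite boolean combinations of discs, with complements taken inside `K°`. -/
inductive IsBoolCombOfDiscs : Set (LaurentSeries ℚ) → Prop
  | disc {D : Set (LaurentSeries ℚ)} : IsDisc D → IsBoolCombOfDiscs D
  | compl {D : Set (LaurentSeries ℚ)} : IsBoolCombOfDiscs D → IsBoolCombOfDiscs (valRing \ D)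
  | union {D D' : Set (LaurentSeries ℚ)} :
      IsBoolCombOfDiscs D → IsBoolCombOfDiscs D' → IsBoolCombOfDiscs (D ∪ D')
  | inter {D D' : Set (LaurentSeries ℚ)} :
      IsBoolCombOfDiscs D → IsBoolCombOfDiscs D' → IsBoolCombOfDiscs (D ∩ D')

/-- `t^n`. -/
def seq (n : ℕ) : LaurentSeries ℚ := HahnSeries.single (n : ℤ) 1

lemma seq_ne_zero (n : ℕ) : seq n ≠ 0 := HahnSeries.single_ne_zero one_ne_zero

lemma order_seq (n : ℕ) : (seq n).order = n := HahnSeries.order_single one_ne_zero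

lemma tAbs_of_ne {f : LaurentSeries ℚ} (hf : f ≠ 0) :
    tAbs f = (2:ℝ) ^ (-(HahnSeries.order f)) := if_neg hf

lemma tAbs_seq (n : ℕ) : tAbs (seq n) = (2:ℝ) ^ (-(n:ℤ)) := by
  rw [tAbs_of_ne (seq_ne_zero n), order_seq]

lemma tAbs_nonneg (f : LaurentSeries ℚ) : 0 ≤ tAbs f := by
  unfold tAbs; split
  · exact le_refl _
  · positivity

lemma tAbs_pos {f : LaurentSeries ℚ} (hf : f ≠ 0) : 0 < tAbs f := by
  rw [tAbs_of_ne hf]; positivity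

lemma tAbs_seq_le_one (n : ℕ) : tAbs (seq n) ≤ 1 := by
  rw [tAbs_seq]
  exact zpow_le_one_of_nonpos₀ one_le_two (by omega)


lemma tAbs_seq_sub {a : LaurentSeries ℚ} (ha : a ≠ 0) {n : ℕ} (hn : a.order < (n:ℤ)) :
    tAbs (seq n - a) = tAbs a := by
  have hoa : a.orderTop = (a.order : WithTop ℤ) := (HahnSeries.order_eq_orderTop_of_ne_zero ha).symm
  have hos : (seq n).orderTop = ((n:ℤ) : WithTop ℤ) := HahnSeries.orderTop_single one_ne_zero
  have hlt : a.orderTop < (seq n).orderTop := by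
    rw [hoa, hos]; exact_mod_cast hn
  have h1 : (a - seq n).orderTop = a.orderTop := HahnSeries.orderTop_sub hlt
  have h2 : (seq n - a).orderTop = a.orderTop := by
    rw [← neg_sub a (seq n), HahnSeries.orderTop_neg, h1]
  have hne : seq n - a ≠ 0 := by
    rw [← HahnSeries.orderTop_ne_top, h2, hoa]; exact WithTop.coe_ne_top
  have h3 : (seq n - a).order = a.order := by
    have := (HahnSeries.order_eq_orderTop_of_ne_zero hne).trans (h2.trans hoa)
    exact_mod_cast this
  rw [tAbs_of_ne hne, tAbs_of_ne ha, h3]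

lemma seq_even_sq (k : ℕ) : (seq k) ^ 2 = seq (2 * k) := by
  unfold seq
  rw [HahnSeries.single_pow, one_pow]
  congr 1

lemma seq_odd_not_sq (k : ℕ) : ¬ ∃ y : LaurentSeries ℚ, y ^ 2 = seq (2 * k + 1) := by
  rintro ⟨y, hy⟩
  have h1 : (y ^ 2).order = 2 • y.order := HahnSeries.order_pow y 2
  rw [hy, order_seq, nsmul_eq_mul] at h1
  push_cast at h1
  omega


lemma seq_mem_valRing (n : ℕ) : seq n ∈ valRing := tAbs_seq_le_one n

lemma tAbs_seq_eq_pow (n : ℕ) : tAbs (seq n) = (1/2 : ℝ) ^ n := by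
  rw [tAbs_seq, zpow_neg, zpow_natCast, one_div, inv_pow]

lemma eventually_const {S : Set (LaurentSeries ℚ)} (h : IsBoolCombOfDiscs S) :
    ∃ N : ℕ, ∀ m n : ℕ, N ≤ m → N ≤ n → (seq m ∈ S ↔ seq n ∈ S) := by
  induction h with
  | disc hD =>
    obtain ⟨a, r, ha, ⟨x, k, hx, hk, hrk⟩, hD⟩ := hD
    have hr0 : r ≠ 0 := by
      intro h
      rw [h, zero_pow hk.ne'] at hrk
      exact (tAbs_pos hx).ne hrk
    have hkey : ∀ j : ℕ, a.order.toNat + 1 ≤ j → a ≠ 0 → tAbs (seq j - a) = tAbs a := by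
      intro j hj ha0
      refine tAbs_seq_sub ha0 ?_
      have := Int.self_le_toNat a.order
      omega
    rcases hD with rfl | rfl
    · rcases hr0.lt_or_gt with hr | hr
      · refine ⟨0, fun m n _ _ => iff_of_false ?_ ?_⟩ <;> rintro ⟨-, h2⟩ <;>
          exact absurd (h2.trans hr) (not_lt.2 (tAbs_nonneg _))
      · rcases eq_or_ne a 0 with rfl | ha0
        · obtain ⟨N, hN⟩ := exists_pow_lt_of_lt_one hr (by norm_num : (1/2 : ℝ) < 1)
          refine ⟨N, fun m n hm hn =>
            iff_of_true ⟨seq_mem_valRing m, ?_⟩ ⟨seq_mem_valRing n, ?_⟩⟩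
          · rw [sub_zero, tAbs_seq_eq_pow]
            exact lt_of_le_of_lt (pow_le_pow_of_le_one (by norm_num) (by norm_num) hm) hN
          · rw [sub_zero, tAbs_seq_eq_pow]
            exact lt_of_le_of_lt (pow_le_pow_of_le_one (by norm_num) (by norm_num) hn) hN
        · refine ⟨a.order.toNat + 1, fun m n hm hn => ?_⟩
          simp only [Set.mem_setOf_eq, hkey m hm ha0, hkey n hn ha0, seq_mem_valRing, true_and]
    · rcases hr0.lt_or_gt with hr | hr
      · refine ⟨0, fun m n _ _ => iff_of_false ?_ ?_⟩ <;> rintro ⟨-, h2⟩ <;>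
          exact absurd (lt_of_le_of_lt h2 hr) (not_lt.2 (tAbs_nonneg _))
      · rcases eq_or_ne a 0 with rfl | ha0
        · obtain ⟨N, hN⟩ := exists_pow_lt_of_lt_one hr (by norm_num : (1/2 : ℝ) < 1)
          refine ⟨N, fun m n hm hn =>
            iff_of_true ⟨seq_mem_valRing m, ?_⟩ ⟨seq_mem_valRing n, ?_⟩⟩
          · rw [sub_zero, tAbs_seq_eq_pow]
            exact (lt_of_le_of_lt (pow_le_pow_of_le_one (by norm_num) (by norm_num) hm) hN).le
          · rw [sub_zero, tAbs_seq_eq_pow]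
            exact (lt_of_le_of_lt (pow_le_pow_of_le_one (by norm_num) (by norm_num) hn) hN).le
        · refine ⟨a.order.toNat + 1, fun m n hm hn => ?_⟩
          simp only [Set.mem_setOf_eq, hkey m hm ha0, hkey n hn ha0, seq_mem_valRing, true_and]
  | compl hD ih =>
    obtain ⟨N, hN⟩ := ih
    refine ⟨N, fun m n hm hn => ?_⟩
    simp only [Set.mem_diff, seq_mem_valRing, true_and]
    exact not_congr (hN m n hm hn)
  | union hD hD' ih ih' =>
    obtain ⟨N, hN⟩ := ih
    obtain ⟨N', hN'⟩ := ih'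
    refine ⟨max N N', fun m n hm hn => ?_⟩
    simp only [Set.mem_union]
    exact or_congr (hN m n (le_of_max_le_left hm) (le_of_max_le_left hn))
      (hN' m n (le_of_max_le_right hm) (le_of_max_le_right hn))
  | inter hD hD' ih ih' =>
    obtain ⟨N, hN⟩ := ih
    obtain ⟨N', hN'⟩ := ih'
    refine ⟨max N N', fun m n hm hn => ?_⟩
    simp only [Set.mem_inter_iff]
    exact and_congr (hN m n (le_of_max_le_left hm) (le_of_max_le_left hn))
      (hN' m n (le_of_max_le_right hm) (le_of_max_le_right hn))


/-- The set `P₂` of squares in `K° = ℚ[[t]]` (so a subanalytic set which is not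
`D`-semianalytic) cannot be written as a finite boolean combination of discs in `K°`. -/
theorem squares_not_boolean_combination_of_discs :
    ¬ IsBoolCombOfDiscs
        {x : LaurentSeries ℚ | tAbs x ≤ 1 ∧ ∃ y : LaurentSeries ℚ, y ^ 2 = x} := by
  intro h
  obtain ⟨N, hN⟩ := eventually_const h
  have heven : seq (2 * N) ∈
      {x : LaurentSeries ℚ | tAbs x ≤ 1 ∧ ∃ y : LaurentSeries ℚ, y ^ 2 = x} :=
    ⟨tAbs_seq_le_one _, seq N, seq_even_sq N⟩
  have hodd : seq (2 * N + 1) ∉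
      {x : LaurentSeries ℚ | tAbs x ≤ 1 ∧ ∃ y : LaurentSeries ℚ, y ^ 2 = x} := by
    rintro ⟨-, hy⟩
    exact seq_odd_not_sq N hy
  exact hodd ((hN (2 * N) (2 * N + 1) (by omega) (by omega)).mp heven)

end LaurentSquares
end
end
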